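/- arXiv:2209.08279 — 5 statements merged into one kernel-verified Lean document; each statement's English description precedes it below -/
import Mathlib

section
/- Let π be a set of primes and let G be a soluble profinite group of finite rank belonging to C_π, and assume the quotient G/Fit(G) is abelian. Suppose F := Fit(G) is nilpotent of class c and is topologically generated by a finite set T. Then for every x ∈ G one has x ∈ F if and only if the left-normed commutator [t, x, x, …, x] with c copies of x equals 1 for every t ∈ T. -/
open FirstOrder

/-! Common definitions: profinite-group notions used in the statement.

A profinite group (compact Hausdorff totally disconnected topological group)
is represented by Mathlib's bundled `ProfiniteGrp`. -/

/-- The functions of the first-order language of groups: one constant (`1`),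
one unary function (inverse), one binary function (multiplication). -/
def grpFunctions : ℕ → Type
  | 0 => Unit
  | 1 => Unit
  | 2 => Unit
  | _ => Empty

/-- The first-order language of groups. -/
def Lgp : FirstOrder.Language := ⟨grpFunctions, fun _ => Empty⟩

/-- Any group is an `Lgp`-structure in the obvious way. -/
instance grpStructure (G : Type*) [Group G] : Lgp.Structure G where
  funMap {n} f v :=
    match n, f, v with
    | 0, _, _ => (1 : G)
    | 1, _, v => (v 0)⁻¹
    | 2, _, v => v 0 * v 1
    | (_ + 3), f, _ => f.elim
  RelMap {n} r := r.elim

/-- A profinite group is pronilpotent if every continuous finite quotient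
(equivalently, every quotient by an open normal subgroup) is nilpotent. -/
def IsPronilpotent (G : Type*) [Group G] [TopologicalSpace G] : Prop :=
  ∀ (N : Subgroup G) [N.Normal], IsOpen (N : Set G) → Group.IsNilpotent (G ⧸ N)

/-- A profinite group is prosoluble if every continuous finite quotient
(equivalently, every quotient by an open normal subgroup) is soluble. -/
def IsProsoluble (G : Type*) [Group G] [TopologicalSpace G] : Prop :=
  ∀ (N : Subgroup G) [N.Normal], IsOpen (N : Set G) → IsSolvable (G ⧸ N)

/-- `p ∈ primesOf G` iff `G` has a nontrivial Sylow pro-`p` subgroup; equivalently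
(for a profinite group) `p` divides the order of some continuous finite quotient. -/
def primesOf (G : Type*) [Group G] [TopologicalSpace G] : Set ℕ :=
  {p | p.Prime ∧ ∃ N : Subgroup G, N.Normal ∧ IsOpen (N : Set G) ∧
    N.FiniteIndex ∧ p ∣ N.index}

/-- A profinite group is pro-`p` if every open normal subgroup has index a power of `p`. -/
def IsProP (p : ℕ) (G : Type*) [Group G] [TopologicalSpace G] : Prop :=
  ∀ N : Subgroup G, N.Normal → IsOpen (N : Set G) → ∃ k : ℕ, N.index = p ^ k

/-- Every closed subgroup of `G` is topologically generated by at most `r` elements. -/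
def HasRankLE (G : Type*) [Group G] [TopologicalSpace G] [IsTopologicalGroup G] (r : ℕ) : Prop :=
  ∀ H : Subgroup G, IsClosed (H : Set G) →
    ∃ S : Finset G, S.card ≤ r ∧ (Subgroup.closure (S : Set G)).topologicalClosure = H

/-- A profinite group has finite rank if for some `r` every closed subgroup is
topologically generated by at most `r` elements. -/
def FiniteRank (G : Type*) [Group G] [TopologicalSpace G] [IsTopologicalGroup G] : Prop :=
  ∃ r : ℕ, HasRankLE G r

/-- Topologically finitely generated. -/
def TopFG (G : Type*) [Group G] [TopologicalSpace G] [IsTopologicalGroup G] : Prop :=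
  ∃ S : Finset G, (Subgroup.closure (S : Set G)).topologicalClosure = ⊤

/-- The class `C_π`: pronilpotent with `π(G) ⊆ π`. -/
def InCpi (π : Set ℕ) (G : Type*) [Group G] [TopologicalSpace G] : Prop :=
  IsPronilpotent G ∧ primesOf G ⊆ π

/-- A `π`-number: a positive integer all of whose prime divisors lie in `π`. -/
def IsPiNumber (π : Set ℕ) (q : ℕ) : Prop :=
  0 < q ∧ ∀ p : ℕ, p.Prime → p ∣ q → p ∈ π

/-- The class `C_π^q`: there is an open normal subgroup `H ∈ C_π` with `g ^ q ∈ H`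
for all `g ∈ G`. -/
def InCpiq (π : Set ℕ) (q : ℕ) (G : Type*) [Group G] [TopologicalSpace G] : Prop :=
  ∃ H : Subgroup G, H.Normal ∧ IsOpen (H : Set G) ∧ InCpi π ↥H ∧ ∀ g : G, g ^ q ∈ H

/-- The OS (Oger–Sabbagh) condition: the image of the centre in the quotient by the
closed derived subgroup is torsion, i.e. every central element has a positive power
lying in the closure of the derived subgroup. -/
def OSCondition (G : Type*) [Group G] [TopologicalSpace G] [IsTopologicalGroup G] : Prop :=
  ∀ g ∈ Subgroup.center G, ∃ n : ℕ, 0 < n ∧ g ^ n ∈ (commutator G).topologicalClosure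

/-- `F` is the Fitting subgroup of the profinite group `G`: the largest nilpotent
closed normal subgroup. -/
def IsFittingSubgroup (G : Type*) [Group G] [TopologicalSpace G] (F : Subgroup G) : Prop :=
  IsClosed (F : Set G) ∧ F.Normal ∧ Group.IsNilpotent ↥F ∧
    ∀ K : Subgroup G, IsClosed (K : Set G) → K.Normal → Group.IsNilpotent ↥K → K ≤ F

/-- The FC-centre: the set of elements with finite conjugacy class. -/
def FCCentre (G : Type*) [Group G] : Set G :=
  {g : G | {h : G | IsConj g h}.Finite}

/-- The left-normed iterated commutator `[t, x, x, …, x]` (with `n` copies of `x`),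
where `[t, x] = t⁻¹x⁻¹tx`. -/
def commIter {G : Type*} [Group G] (t x : G) : ℕ → G
  | 0 => t
  | n + 1 => (commIter t x n)⁻¹ * x⁻¹ * commIter t x n * x


/-! ### Auxiliary development for the proof -/

namespace Stmt10

open Subgroup
open scoped commutatorElement

variable {Γ : Type*} [Group Γ]

/-- The classical commutator `a⁻¹b⁻¹ab` (note that Mathlib's `⁅a,b⁆` is `aba⁻¹b⁻¹`). -/
def cmt (a b : Γ) : Γ := a⁻¹ * b⁻¹ * a * b

lemma cmt_mem {a b : Γ} {U V : Subgroup Γ} (ha : a ∈ U) (hb : b ∈ V) : cmt a b ∈ ⁅U, V⁆ := by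
  have : cmt a b = ⁅a⁻¹, b⁻¹⁆ := by simp [cmt, commutatorElement_def]
  rw [this]; exact Subgroup.commutator_mem_commutator (inv_mem ha) (inv_mem hb)

lemma cmt_one_left (z : Γ) : cmt (1 : Γ) z = 1 := by unfold cmt; group

lemma cmt_one_right (a : Γ) : cmt a (1 : Γ) = 1 := by unfold cmt; group

lemma cmt_mul_left (a b z : Γ) : cmt (a * b) z = b⁻¹ * cmt a z * b * cmt b z := by
  unfold cmt; group

lemma cmt_inv_left (a z : Γ) : cmt a⁻¹ z = a * (cmt a z)⁻¹ * a⁻¹ := by unfold cmt; group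

lemma cmt_mul_right (a z w : Γ) : cmt a (z * w) = cmt a w * (w⁻¹ * cmt a z * w) := by
  unfold cmt; group

lemma cmt_inv_right (a z : Γ) : cmt a z⁻¹ = z * (cmt a z)⁻¹ * z⁻¹ := by unfold cmt; group

lemma cmt_conj (u g z : Γ) :
    cmt (g * u * g⁻¹) z = g * (cmt u (cmt z g) * ((cmt z g)⁻¹ * cmt u z * cmt z g)) * g⁻¹ := by
  unfold cmt; group

lemma conj_eq_mul_cmt (a g : Γ) : g * a * g⁻¹ = a * cmt a g⁻¹ := by unfold cmt; group

lemma conj_mem' {R : Subgroup Γ} (hR : R.Normal) {w : Γ} (hw : w ∈ R) (g : Γ) :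
    g⁻¹ * w * g ∈ R := by simpa using hR.conj_mem w hw g⁻¹

/-- a subgroup containing the commutator subgroup is normal -/
lemma normal_of_commutator_le {A : Subgroup Γ} (h : ⁅(⊤ : Subgroup Γ), ⊤⁆ ≤ A) : A.Normal := by
  constructor
  intro a ha g
  rw [conj_eq_mul_cmt]
  exact mul_mem ha (h (cmt_mem (mem_top a) (mem_top g⁻¹)))

/-- the closure of a conjugation-invariant set is normal -/
lemma closure_normal_of_conj {s : Set Γ} (h : ∀ g : Γ, ∀ a ∈ s, g * a * g⁻¹ ∈ s) :
    (Subgroup.closure s).Normal := by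
  constructor
  intro n hn g
  induction hn using Subgroup.closure_induction with
  | mem a ha => exact Subgroup.subset_closure (h g a ha)
  | one => simpa using one_mem _
  | mul a b _ _ iha ihb =>
      have : g * (a * b) * g⁻¹ = (g * a * g⁻¹) * (g * b * g⁻¹) := by group
      rw [this]; exact mul_mem iha ihb
  | inv a _ iha =>
      have : g * a⁻¹ * g⁻¹ = (g * a * g⁻¹)⁻¹ := by group
      rw [this]; exact inv_mem iha

/-- a commutator of subgroups is bounded by `R` as soon as all classical commutators
of elements lie in `R` -/
lemma commutator_le_of_cmt {W X R : Subgroup Γ} (h : ∀ w ∈ W, ∀ t ∈ X, cmt w t ∈ R) :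
    ⁅W, X⁆ ≤ R := by
  rw [Subgroup.commutator_le]
  intro g1 h1 g2 h2
  have : ⁅g1, g2⁆ = cmt g1⁻¹ g2⁻¹ := by unfold cmt; rw [commutatorElement_def]; group
  rw [this]
  exact h _ (inv_mem h1) _ (inv_mem h2)

lemma commIter_succ (t x : Γ) (n : ℕ) : commIter t x (n + 1) = cmt (commIter t x n) x := rfl

lemma commIter_eq_iterate (t x : Γ) (n : ℕ) :
    commIter t x n = (fun a => cmt a x)^[n] t := by
  induction n with
  | zero => rfl
  | succ n ih => rw [Function.iterate_succ_apply', ← ih, commIter_succ]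

lemma map_commIter {Λ : Type*} [Group Λ] (f : Γ →* Λ) (t x : Γ) (n : ℕ) :
    f (commIter t x n) = commIter (f t) (f x) n := by
  induction n with
  | zero => rfl
  | succ n ih => simp only [commIter, map_mul, map_inv, ih]

lemma iterate_cmt_one (x : Γ) (k : ℕ) : (fun a => cmt a x)^[k] (1 : Γ) = 1 := by
  induction k with
  | zero => rfl
  | succ k ih => rw [Function.iterate_succ_apply', ih, cmt_one_left]

/-- The three subgroups lemma, relative version. -/
lemma tsl {X Y Z N : Subgroup Γ} [hN : N.Normal]
    (h1 : ⁅⁅Y, Z⁆, X⁆ ≤ N) (h2 : ⁅⁅Z, X⁆, Y⁆ ≤ N) : ⁅⁅X, Y⁆, Z⁆ ≤ N := by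
  set π := QuotientGroup.mk' N with hπ
  have key : ∀ P : Subgroup Γ, P.map π = ⊥ ↔ P ≤ N := by
    intro P
    rw [Subgroup.map_eq_bot_iff, QuotientGroup.ker_mk']
  rw [← key]
  rw [Subgroup.map_commutator, Subgroup.map_commutator]
  apply Subgroup.commutator_commutator_eq_bot_of_rotate
  · rw [← Subgroup.map_commutator, ← Subgroup.map_commutator, key]; exact h1
  · rw [← Subgroup.map_commutator, ← Subgroup.map_commutator, key]; exact h2

section AGam

variable (A : Subgroup Γ)

/-- the lower central series of `A` as subgroups of the ambient group -/
def Agam : ℕ → Subgroup Γ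
  | 0 => A
  | n + 1 => ⁅Agam n, A⁆

variable [hA : A.Normal]

lemma Agam_normal (n : ℕ) : (Agam A n).Normal := by
  induction n with
  | zero => exact hA
  | succ n ih => exact @Subgroup.commutator_normal _ _ _ _ ih hA

lemma Agam_le_A (n : ℕ) : Agam A n ≤ A := by
  cases n with
  | zero => exact le_rfl
  | succ n => exact Subgroup.commutator_le_right _ _

lemma Agam_antitone {n n' : ℕ} (h : n ≤ n') : Agam A n' ≤ Agam A n := by
  refine antitone_nat_of_succ_le (fun k => ?_) h
  haveI := Agam_normal A k
  exact Subgroup.commutator_le_left _ _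

lemma Agam_comm_le (a : ℕ) : ∀ b : ℕ, ⁅Agam A a, Agam A b⁆ ≤ Agam A (a + b + 1) := by
  induction a with
  | zero =>
      intro b
      rw [Subgroup.commutator_comm, Nat.zero_add]
      exact le_of_eq rfl
  | succ a ih =>
      intro b
      have h1 : ⁅⁅A, Agam A b⁆, Agam A a⁆ ≤ Agam A (a + 1 + b + 1) := by
        rw [Subgroup.commutator_comm A (Agam A b)]
        show ⁅Agam A (b + 1), Agam A a⁆ ≤ _
        rw [Subgroup.commutator_comm]
        have := ih (b + 1)
        rwa [show a + (b + 1) + 1 = a + 1 + b + 1 by omega] at this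
      have h2 : ⁅⁅Agam A b, Agam A a⁆, A⁆ ≤ Agam A (a + 1 + b + 1) := by
        have hin : ⁅Agam A b, Agam A a⁆ ≤ Agam A (a + b + 1) := by
          rw [Subgroup.commutator_comm]; exact ih b
        refine le_trans (Subgroup.commutator_mono hin le_rfl) ?_
        rw [show a + 1 + b + 1 = (a + b + 1) + 1 by omega]
        exact le_rfl
      haveI := Agam_normal A (a + 1 + b + 1)
      exact tsl h1 h2

lemma Agam_le_map (n : ℕ) : Agam A n ≤ (Subgroup.lowerCentralSeries (⊤ : Subgroup ↥A) n).map A.subtype := by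
  induction n with
  | zero =>
      show A ≤ (⊤ : Subgroup ↥A).map A.subtype
      rw [← MonoidHom.range_eq_map, A.range_subtype]
  | succ n ih =>
      show ⁅Agam A n, A⁆ ≤ (⁅Subgroup.lowerCentralSeries (⊤ : Subgroup ↥A) n, (⊤ : Subgroup ↥A)⁆).map A.subtype
      rw [Subgroup.map_commutator]
      refine Subgroup.commutator_mono ih ?_
      rw [← MonoidHom.range_eq_map, A.range_subtype]

lemma Agam_eq_bot {c : ℕ} (hnilA : Subgroup.lowerCentralSeries (⊤ : Subgroup ↥A) c = ⊥) : Agam A c = ⊥ := by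
  rw [eq_bot_iff]
  refine le_trans (Agam_le_map A c) ?_
  rw [hnilA]
  simp

lemma A_eq_bot (hnilA : Subgroup.lowerCentralSeries (⊤ : Subgroup ↥A) 0 = ⊥) : A = ⊥ := by
  rw [eq_bot_iff]
  intro a ha
  have h1 : (⟨a, ha⟩ : ↥A) ∈ (⊥ : Subgroup ↥A) := hnilA ▸ Subgroup.mem_top _
  rw [Subgroup.mem_bot] at h1 ⊢
  exact congrArg Subtype.val h1

end AGam

section Core

variable (S : Set Γ) (x : Γ)

/-- generating set for the auxiliary normal subgroups `B j` -/
def bgens (j : ℕ) : Set Γ := {g | ∃ t ∈ S, ∃ i, j ≤ i ∧ g = (fun a => cmt a x)^[i] t}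

/-- the normal closure of the iterated commutators of weight at least `j` -/
def B (j : ℕ) : Subgroup Γ := Subgroup.normalClosure (bgens S x j)

instance B_normal (j : ℕ) : (B S x j).Normal := Subgroup.normalClosure_normal

lemma B_antitone {j j' : ℕ} (h : j ≤ j') : B S x j' ≤ B S x j :=
  Subgroup.normalClosure_mono (fun g ⟨t, ht, i, hij, hg⟩ => ⟨t, ht, i, le_trans h hij, hg⟩)

variable {A : Subgroup Γ}

lemma B_le_A (hcomm : ⁅(⊤ : Subgroup Γ), ⊤⁆ ≤ A) (hSA : S ⊆ A) (j : ℕ) : B S x j ≤ A := by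
  haveI := normal_of_commutator_le hcomm
  apply Subgroup.normalClosure_le_normal
  rintro g ⟨t, ht, i, hij, rfl⟩
  cases i with
  | zero => exact hSA ht
  | succ i =>
      rw [Function.iterate_succ_apply']
      exact hcomm (cmt_mem (mem_top _) (mem_top _))

lemma A_le_B0 (hSA : Subgroup.closure S = A) : A ≤ B S x 0 := by
  rw [← hSA, Subgroup.closure_le]
  intro t ht
  exact Subgroup.subset_normalClosure ⟨t, ht, 0, le_rfl, rfl⟩

lemma B_c_bot {c : ℕ} (hS : ∀ t ∈ S, commIter t x c = 1) : B S x c = ⊥ := by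
  rw [eq_bot_iff]
  apply Subgroup.normalClosure_le_normal
  rintro g ⟨t, ht, i, hci, rfl⟩
  have hi : i = (i - c) + c := by omega
  rw [hi, Function.iterate_add_apply]
  have h1 : (fun a => cmt a x)^[c] t = 1 := by
    rw [← commIter_eq_iterate]; exact hS t ht
  rw [h1, iterate_cmt_one]
  exact Subgroup.one_mem _

/-- admissible subgroups with weights -/
inductive Adm : ℕ → Subgroup Γ → Prop
  | basic (j : ℕ) : Adm (j + 1) (B S x j)
  | comm {m n : ℕ} {U V : Subgroup Γ} : Adm m U → Adm n V → Adm (m + n) ⁅U, V⁆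

lemma Adm.normal {m : ℕ} {U : Subgroup Γ} (h : Adm S x m U) : U.Normal := by
  induction h with
  | basic j => infer_instance
  | comm hU hV ihU ihV => exact @Subgroup.commutator_normal _ _ _ _ ihU ihV

lemma Adm.one_le {m : ℕ} {U : Subgroup Γ} (h : Adm S x m U) : 1 ≤ m := by
  induction h with
  | basic j => omega
  | comm hU hV ihU ihV => omega

lemma Adm.le_A (hcomm : ⁅(⊤ : Subgroup Γ), ⊤⁆ ≤ A) (hSA : S ⊆ A) {m : ℕ} {U : Subgroup Γ}
    (h : Adm S x m U) : U ≤ A := by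
  induction h with
  | basic j => exact B_le_A S x hcomm hSA j
  | @comm m n U V hU hV ihU ihV =>
      haveI := hV.normal
      exact le_trans (Subgroup.commutator_le_right _ _) ihV

/-- the filtration -/
def Phi (m : ℕ) : Subgroup Γ :=
  Subgroup.closure (⋃ U ∈ {U : Subgroup Γ | ∃ k, m ≤ k ∧ Adm S x k U}, (U : Set Γ))

lemma le_Phi {m k : ℕ} {U : Subgroup Γ} (h : Adm S x k U) (hmk : m ≤ k) : U ≤ Phi S x m :=
  fun u hu => Subgroup.subset_closure (Set.mem_biUnion ⟨k, hmk, h⟩ hu)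

lemma Phi_antitone {m m' : ℕ} (h : m ≤ m') : Phi S x m' ≤ Phi S x m := by
  apply Subgroup.closure_mono
  refine Set.iUnion₂_subset fun U hU => ?_
  obtain ⟨k, hk, hAdm⟩ := hU
  intro g hg
  exact Set.mem_biUnion ⟨k, le_trans h hk, hAdm⟩ hg

instance Phi_normal (m : ℕ) : (Phi S x m).Normal := by
  apply closure_normal_of_conj
  rintro g a ha
  rw [Set.mem_iUnion₂] at ha ⊢
  obtain ⟨U, hU, haU⟩ := ha
  obtain ⟨k, hk, hAdm⟩ := hU
  haveI := hAdm.normal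
  exact ⟨U, ⟨k, hk, hAdm⟩, Subgroup.Normal.conj_mem ‹U.Normal› a haU g⟩

/-- the commutator of `Phi k` with an admissible subgroup of weight `m`
lands in `Phi (k + m)` -/
lemma comm_Phi_left {k m : ℕ} {U : Subgroup Γ} (hU : Adm S x m U) :
    ⁅Phi S x k, U⁆ ≤ Phi S x (k + m) := by
  have key : ∀ z, z ∈ Phi S x k → ∀ u ∈ U, cmt z u ∈ Phi S x (k + m) := by
    intro z hz
    unfold Phi at hz
    induction hz using Subgroup.closure_induction with
    | mem a ha =>
        intro u hu
        rw [Set.mem_iUnion₂] at ha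
        obtain ⟨W, ⟨k', hk', hW⟩, haW⟩ := ha
        exact le_Phi S x (Adm.comm hW hU) (by omega) (cmt_mem haW hu)
    | one => intro u hu; rw [cmt_one_left]; exact one_mem _
    | mul a b ha hb iha ihb =>
        intro u hu
        rw [cmt_mul_left]
        exact mul_mem (conj_mem' (Phi_normal S x _) (iha u hu) b) (ihb u hu)
    | inv a ha iha =>
        intro u hu
        rw [cmt_inv_left]
        exact (Phi_normal S x _).conj_mem _ (inv_mem (iha u hu)) a
  exact commutator_le_of_cmt key

lemma Adm.cmt_x_mem (hSA : Subgroup.closure S = A) (hcomm : ⁅(⊤ : Subgroup Γ), ⊤⁆ ≤ A) :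
    ∀ {m : ℕ} {U : Subgroup Γ}, Adm S x m U → ∀ u ∈ U, cmt u x ∈ Phi S x (m + 1) := by
  have hk : ∀ g : Γ, cmt x g ∈ B S x 0 := fun g =>
    A_le_B0 S x hSA (hcomm (cmt_mem (mem_top _) (mem_top _)))
  intro m U h
  induction h with
  | basic j =>
      intro u hu
      set R := Phi S x (j + 1 + 1) with hR
      haveI hRn : R.Normal := Phi_normal S x _
      have hBB : ⁅B S x j, B S x 0⁆ ≤ R :=
        le_Phi S x (Adm.comm (Adm.basic j) (Adm.basic 0)) (by omega)
      have hB1 : B S x (j + 1) ≤ R := le_Phi S x (Adm.basic (j + 1)) (by omega)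
      let M : Subgroup Γ :=
        { carrier := {b | b ∈ B S x j ∧ cmt b x ∈ R}
          one_mem' := ⟨one_mem _, by rw [cmt_one_left]; exact one_mem _⟩
          mul_mem' := by
            rintro a b ⟨haB, haR⟩ ⟨hbB, hbR⟩
            refine ⟨mul_mem haB hbB, ?_⟩
            rw [cmt_mul_left]
            exact mul_mem (conj_mem' hRn haR b) hbR
          inv_mem' := by
            rintro a ⟨haB, haR⟩
            refine ⟨inv_mem haB, ?_⟩
            rw [cmt_inv_left]
            exact hRn.conj_mem _ (inv_mem haR) a }
      haveI hMn : M.Normal := by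
        constructor
        rintro b ⟨hbB, hbR⟩ g
        refine ⟨(B_normal S x j).conj_mem b hbB g, ?_⟩
        show cmt (g * b * g⁻¹) x ∈ R
        rw [cmt_conj]
        refine hRn.conj_mem _ (mul_mem ?_ ?_) g
        · exact hBB (cmt_mem hbB (hk g))
        · exact conj_mem' hRn hbR _
      have hBM : B S x j ≤ M := by
        apply Subgroup.normalClosure_le_normal
        rintro a ⟨t, ht, i, hij, rfl⟩
        refine ⟨Subgroup.subset_normalClosure ⟨t, ht, i, hij, rfl⟩, ?_⟩
        show cmt ((fun a => cmt a x)^[i] t) x ∈ R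
        have hstep : cmt ((fun a => cmt a x)^[i] t) x = (fun a => cmt a x)^[i + 1] t := by
          rw [Function.iterate_succ_apply']
        rw [hstep]
        exact hB1 (Subgroup.subset_normalClosure ⟨t, ht, i + 1, by omega, rfl⟩)
      exact (hBM hu).2
  | @comm m n U V hU hV ihU ihV =>
      intro u hu
      set X := Subgroup.closure ({x} : Set Γ) with hX
      have hxX : x ∈ X := Subgroup.subset_closure rfl
      have hcl : ∀ (W : Subgroup Γ) (k : ℕ), (∀ w ∈ W, cmt w x ∈ Phi S x k) →
          ⁅W, X⁆ ≤ Phi S x k := by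
        intro W k hW
        apply commutator_le_of_cmt
        intro w hw ξ hξ
        induction hξ using Subgroup.closure_induction with
        | mem g hg =>
            rw [show g = x from hg]
            exact hW w hw
        | one => rw [cmt_one_right]; exact one_mem _
        | mul z w' hz hw' ihz ihw' =>
            rw [cmt_mul_right]
            exact mul_mem ihw' (conj_mem' (Phi_normal S x _) ihz w')
        | inv z hz ihz =>
            rw [cmt_inv_right]
            exact (Phi_normal S x _).conj_mem _ (inv_mem ihz) z
      have hUX : ⁅U, X⁆ ≤ Phi S x (m + 1) := hcl U (m + 1) ihU
      have hVX : ⁅V, X⁆ ≤ Phi S x (n + 1) := hcl V (n + 1) ihV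
      have h1 : ⁅⁅V, X⁆, U⁆ ≤ Phi S x (m + n + 1) := by
        refine le_trans (Subgroup.commutator_mono hVX le_rfl) ?_
        have h := comm_Phi_left S x (k := n + 1) hU
        rwa [show n + 1 + m = m + n + 1 by omega] at h
      have h2 : ⁅⁅X, U⁆, V⁆ ≤ Phi S x (m + n + 1) := by
        rw [Subgroup.commutator_comm X U]
        refine le_trans (Subgroup.commutator_mono hUX le_rfl) ?_
        have h := comm_Phi_left S x (k := m + 1) hV
        rwa [show m + 1 + n = m + n + 1 by omega] at h
      exact tsl h1 h2 (cmt_mem hu hxX)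

lemma cmt_Phi_x (hSA : Subgroup.closure S = A) (hcomm : ⁅(⊤ : Subgroup Γ), ⊤⁆ ≤ A) (k : ℕ) :
    ∀ w ∈ Phi S x k, cmt w x ∈ Phi S x (k + 1) := by
  intro w hw
  unfold Phi at hw
  induction hw using Subgroup.closure_induction with
  | mem a ha =>
      rw [Set.mem_iUnion₂] at ha
      obtain ⟨W, ⟨k', hk', hW⟩, haW⟩ := ha
      exact Phi_antitone S x (by omega) (Adm.cmt_x_mem S x hSA hcomm hW a haW)
  | one => rw [cmt_one_left]; exact one_mem _
  | mul a b ha hb iha ihb =>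
      rw [cmt_mul_left]
      exact mul_mem (conj_mem' (Phi_normal S x _) iha b) ihb
  | inv a ha iha =>
      rw [cmt_inv_left]
      exact (Phi_normal S x _).conj_mem _ (inv_mem iha) a

lemma Adm_le_Agam (hSA : Subgroup.closure S = A) (hcomm : ⁅(⊤ : Subgroup Γ), ⊤⁆ ≤ A)
    {c : ℕ} (hnilA : Subgroup.lowerCentralSeries (⊤ : Subgroup ↥A) c = ⊥) (hS : ∀ t ∈ S, commIter t x c = 1) :
    ∀ {m : ℕ} {U : Subgroup Γ}, Adm S x m U → ∀ r : ℕ, r * c < m → U ≤ Agam A r := by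
  haveI hAn : A.Normal := normal_of_commutator_le hcomm
  have hSsub : S ⊆ A := fun t ht => hSA ▸ Subgroup.subset_closure ht
  intro m U h
  induction h with
  | basic j =>
      intro r hr
      rcases Nat.eq_zero_or_pos c with hc | hc
      · subst hc
        have hA0 : A = ⊥ := A_eq_bot A hnilA
        refine le_trans (B_le_A S x hcomm hSsub j) ?_
        rw [hA0]
        exact bot_le
      · match r with
        | 0 => exact B_le_A S x hcomm hSsub j
        | r + 1 =>
            have hcj : c ≤ j := by
              have h1 : c ≤ (r + 1) * c := Nat.le_mul_of_pos_left c (Nat.succ_pos r)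
              omega
            refine le_trans (B_antitone S x hcj) ?_
            rw [B_c_bot S x hS]
            exact bot_le
  | @comm m n U V hU hV ihU ihV =>
      intro r hr
      rcases Nat.eq_zero_or_pos c with hc | hc
      · subst hc
        have hA0 : A = ⊥ := A_eq_bot A hnilA
        have hU0 : U ≤ ⊥ := hA0 ▸ Adm.le_A S x hcomm hSsub hU
        exact le_trans (Subgroup.commutator_mono hU0 le_rfl)
          (le_trans (Subgroup.commutator_le_left _ _) bot_le)
      · have hm1 := Adm.one_le S x hU
        have hn1 := Adm.one_le S x hV
        set r1 := (m - 1) / c with hr1def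
        set r2 := (n - 1) / c with hr2def
        have h1 : r1 * c < m := lt_of_le_of_lt (Nat.div_mul_le_self _ _) (by omega)
        have h2 : r2 * c < n := lt_of_le_of_lt (Nat.div_mul_le_self _ _) (by omega)
        have hm : m ≤ c * r1 + c := by
          have hdm := Nat.div_add_mod (m - 1) c
          have hmod := Nat.mod_lt (m - 1) hc
          have hlt : m - 1 < c * r1 + c := by
            calc m - 1 = c * r1 + (m - 1) % c := hdm.symm
              _ < c * r1 + c := Nat.add_lt_add_left hmod _
          omega
        have hn : n ≤ c * r2 + c := by
          have hdm := Nat.div_add_mod (n - 1) c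
          have hmod := Nat.mod_lt (n - 1) hc
          have hlt : n - 1 < c * r2 + c := by
            calc n - 1 = c * r2 + (n - 1) % c := hdm.symm
              _ < c * r2 + c := Nat.add_lt_add_left hmod _
          omega
        have hrle : r ≤ r1 + r2 + 1 := by
          have hlt : r * c < c * (r1 + r2 + 2) := by
            calc r * c < m + n := hr
              _ ≤ (c * r1 + c) + (c * r2 + c) := by omega
              _ = c * (r1 + r2 + 2) := by ring
          have hlt2 : c * r < c * (r1 + r2 + 2) := by rwa [mul_comm] at hlt
          have := Nat.lt_of_mul_lt_mul_left hlt2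
          omega
        calc ⁅U, V⁆ ≤ ⁅Agam A r1, Agam A r2⁆ :=
              Subgroup.commutator_mono (ihU r1 h1) (ihV r2 h2)
          _ ≤ Agam A (r1 + r2 + 1) := Agam_comm_le A r1 r2
          _ ≤ Agam A r := Agam_antitone A hrle

lemma Phi_bot (hSA : Subgroup.closure S = A) (hcomm : ⁅(⊤ : Subgroup Γ), ⊤⁆ ≤ A)
    {c : ℕ} (hnilA : Subgroup.lowerCentralSeries (⊤ : Subgroup ↥A) c = ⊥) (hS : ∀ t ∈ S, commIter t x c = 1) :
    Phi S x (c * c + 1) = ⊥ := by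
  haveI hAn : A.Normal := normal_of_commutator_le hcomm
  rw [eq_bot_iff]
  unfold Phi
  rw [Subgroup.closure_le]
  rintro a ha
  rw [Set.mem_iUnion₂] at ha
  obtain ⟨U, ⟨k, hk, hU⟩, haU⟩ := ha
  have h1 : U ≤ Agam A c := Adm_le_Agam S x hSA hcomm hnilA hS hU c (by omega)
  have h2 : Agam A c = ⊥ := Agam_eq_bot A hnilA
  have h3 := h1 haU
  rw [h2] at h3
  exact h3

end Core

/-- the lower central series of a subgroup, within the ambient group -/
def chain (H : Subgroup Γ) : ℕ → Subgroup Γ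
  | 0 => H
  | n + 1 => ⁅chain H n, H⁆

/-- The core nilpotency result. -/
theorem core (A : Subgroup Γ) (S : Set Γ) (x : Γ) (c : ℕ)
    (hSA : Subgroup.closure S = A)
    (hcomm : ⁅(⊤ : Subgroup Γ), ⊤⁆ ≤ A)
    (hnilA : Subgroup.lowerCentralSeries (⊤ : Subgroup ↥A) c = ⊥)
    (hS : ∀ t ∈ S, commIter t x c = 1) :
    chain (Subgroup.closure ((A : Set Γ) ∪ {x})) (c * c + 1) = ⊥ := by
  set H := Subgroup.closure ((A : Set Γ) ∪ {x}) with hHdef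
  have main : ∀ n : ℕ, chain H (n + 1) ≤ Phi S x (n + 1) := by
    intro n
    induction n with
    | zero =>
        show ⁅chain H 0, H⁆ ≤ Phi S x 1
        refine le_trans (Subgroup.commutator_mono le_top le_top) (le_trans hcomm ?_)
        exact le_trans (A_le_B0 S x hSA) (le_Phi S x (Adm.basic 0) le_rfl)
    | succ n ih =>
        show ⁅chain H (n + 1), H⁆ ≤ Phi S x (n + 1 + 1)
        refine le_trans (Subgroup.commutator_mono ih le_rfl) ?_
        apply commutator_le_of_cmt
        intro w hw ξ hξ
        induction hξ using Subgroup.closure_induction with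
        | mem g hg =>
            rcases hg with hg | hg
            · have hle : ⁅Phi S x (n + 1), B S x 0⁆ ≤ Phi S x (n + 1 + 1) :=
                comm_Phi_left S x (Adm.basic 0)
              exact hle (cmt_mem hw (A_le_B0 S x hSA hg))
            · rw [show g = x from hg]
              exact cmt_Phi_x S x hSA hcomm (n + 1) w hw
        | one => rw [cmt_one_right]; exact one_mem _
        | mul z w' hz hw' ihz ihw' =>
            rw [cmt_mul_right]
            exact mul_mem ihw' (conj_mem' (Phi_normal S x _) ihz w')
        | inv z hz ihz =>
            rw [cmt_inv_right]
            exact (Phi_normal S x _).conj_mem _ (inv_mem ihz) z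
  have hPhi := Phi_bot S x hSA hcomm hnilA hS
  have hfin := main (c * c)
  rw [hPhi] at hfin
  exact le_bot_iff.mp hfin

end Stmt10

/-- from Proposition `Fit`: let `G` be a soluble `C_π` group of
finite rank with `G/Fit(G)` abelian, and suppose `F := Fit(G)` is nilpotent of class
`c` and topologically generated by the finite set `T`.  Then `x ∈ F` iff
`[t, x, …, x] = 1` (`c` copies of `x`) for every `t ∈ T`. -/
theorem mem_fitting_iff_commIter_eq_one (π : Set ℕ) (hπp : ∀ p ∈ π, p.Prime)
    (G : ProfiniteGrp.{0}) (hsol : IsSolvable (G : Type)) (hrk : FiniteRank G)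
    (hC : InCpi π G)
    (F : Subgroup (G : Type)) (hF : IsFittingSubgroup (G : Type) F)
    (hab : ⁅(⊤ : Subgroup (G : Type)), (⊤ : Subgroup (G : Type))⁆ ≤ F)
    (c : ℕ) (hnil : ∃ h : Group.IsNilpotent ↥F, @Group.nilpotencyClass ↥F _ = c)
    (T : Finset (G : Type)) (hTF : ↑T ⊆ (F : Set (G : Type)))
    (hTgen : (Subgroup.closure (T : Set (G : Type))).topologicalClosure = F) :
    ∀ x : (G : Type), x ∈ F ↔ ∀ t ∈ T, commIter t x c = 1 := by
  classical
  obtain ⟨hFclosed, hFnormal, hFnil0, hFmax⟩ := hF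
  obtain ⟨hnilF, hclass⟩ := hnil
  have hlcsF : Subgroup.lowerCentralSeries (⊤ : Subgroup ↥F) c = ⊥ := by
    rw [← hclass]; exact lowerCentralSeries_nilpotencyClass
  intro x
  constructor
  · -- forward direction
    intro hx t ht
    have htF : t ∈ F := hTF ht
    have hmem : ∀ n : ℕ,
        commIter (⟨t, htF⟩ : ↥F) (⟨x, hx⟩ : ↥F) n ∈ Subgroup.lowerCentralSeries (⊤ : Subgroup ↥F) n := by
      intro n
      induction n with
      | zero => exact Subgroup.mem_top _
      | succ n ih =>
          rw [Stmt10.commIter_succ]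
          exact Stmt10.cmt_mem ih (Subgroup.mem_top _)
    have h1 := hmem c
    rw [hlcsF, Subgroup.mem_bot] at h1
    have h2 := Stmt10.map_commIter F.subtype ⟨t, htF⟩ ⟨x, hx⟩ c
    rw [h1] at h2
    simpa using h2.symm
  · -- backward direction
    intro hxc
    set H0 : Subgroup (G : Type) := Subgroup.closure ((F : Set (G : Type)) ∪ {x}) with hH0
    set H : Subgroup (G : Type) := H0.topologicalClosure with hHdef
    have hFH : F ≤ H :=
      le_trans (fun a ha => Subgroup.subset_closure (Or.inl ha)) H0.le_topologicalClosure
    have hxH : x ∈ H := H0.le_topologicalClosure (Subgroup.subset_closure (Or.inr rfl))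
    have hHnormal : H.Normal := Stmt10.normal_of_commutator_le (le_trans hab hFH)
    have hHnil : Subgroup.lowerCentralSeries (⊤ : Subgroup ↥H) (c * c + 1) = ⊥ := by
      rw [eq_bot_iff]
      intro h hh
      rw [Subgroup.mem_bot]
      by_contra hne
      have hne' : (1 : (G : Type)) ≠ (h : (G : Type)) := fun e => hne (Subtype.ext e.symm)
      haveI : TotallySeparatedSpace (G : Type) :=
        loc_compact_t2_tot_disc_iff_tot_sep.mp inferInstance
      obtain ⟨W, hWclopen, h1W, hhW⟩ := exists_isClopen_of_totally_separated hne'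
      obtain ⟨N, hNW⟩ :=
        IsTopologicalGroup.exist_openNormalSubgroup_sub_clopen_nhds_of_one hWclopen h1W
      have hhN : (h : (G : Type)) ∉ (N : Subgroup (G : Type)) := fun hmem => hhW (hNW hmem)
      set U : Subgroup (G : Type) := (N : Subgroup (G : Type)) with hU
      haveI hUnormal : U.Normal := N.isNormal'
      have hUopen : IsOpen (U : Set (G : Type)) := N.toOpenSubgroup.isOpen
      set π : (G : Type) →* (G : Type) ⧸ U := QuotientGroup.mk' U with hπ
      have hπsurj : Function.Surjective π := QuotientGroup.mk'_surjective U
      -- any comap along π is closed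
      have hcomap_closed : ∀ P : Subgroup ((G : Type) ⧸ U),
          IsClosed ((P.comap π : Subgroup (G : Type)) : Set (G : Type)) := by
        intro P
        have hUle : U ≤ P.comap π := by
          intro u hu
          have h1 : π u = 1 := by
            rw [hπ, QuotientGroup.mk'_apply, QuotientGroup.eq_one_iff]
            exact hu
          show π u ∈ P
          rw [h1]; exact one_mem _
        exact Subgroup.isClosed_of_isOpen _ (Subgroup.isOpen_mono hUle hUopen)
      set φ : ↥F →* (G : Type) ⧸ U := π.comp F.subtype with hφ
      set A' : Subgroup ((G : Type) ⧸ U) := φ.range with hA'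
      have hmapF : ∀ f ∈ F, π f ∈ A' := fun f hf => ⟨⟨f, hf⟩, rfl⟩
      set S' : Set ((G : Type) ⧸ U) := π '' ↑T with hS'
      have hSA' : Subgroup.closure S' = A' := by
        apply le_antisymm
        · rw [Subgroup.closure_le]
          rintro _ ⟨t, ht, rfl⟩
          exact hmapF t (hTF ht)
        · rintro _ ⟨⟨f, hf⟩, rfl⟩
          show π f ∈ Subgroup.closure S'
          have hFle : F ≤ (Subgroup.closure S').comap π := by
            rw [← hTgen]
            apply Subgroup.topologicalClosure_minimal
            · rw [Subgroup.closure_le]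
              intro t ht
              exact Subgroup.mem_comap.mpr (Subgroup.subset_closure ⟨t, ht, rfl⟩)
            · exact hcomap_closed _
          exact hFle hf
      have hcomm' : ⁅(⊤ : Subgroup ((G : Type) ⧸ U)), ⊤⁆ ≤ A' := by
        have htop : ⁅(⊤ : Subgroup ((G : Type) ⧸ U)), ⊤⁆ =
            Subgroup.map π ⁅(⊤ : Subgroup (G : Type)), ⊤⁆ := by
          rw [Subgroup.map_commutator, Subgroup.map_top_of_surjective π hπsurj]
        rw [htop]
        rintro _ ⟨g, hg, rfl⟩
        exact hmapF g (hab hg)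
      have hnilA' : Subgroup.lowerCentralSeries (⊤ : Subgroup ↥A') c = ⊥ := by
        haveI : Group.IsNilpotent ↥F := hnilF
        haveI hN : Group.IsNilpotent ↥A' :=
          nilpotent_of_surjective φ.rangeRestrict φ.rangeRestrict_surjective
        have hcl : Group.nilpotencyClass ↥A' ≤ c := by
          rw [← hclass]
          exact nilpotencyClass_le_of_surjective φ.rangeRestrict φ.rangeRestrict_surjective
        exact lowerCentralSeries_eq_bot_iff_nilpotencyClass_le.mpr hcl
      have hS'comm : ∀ s ∈ S', commIter s (π x) c = 1 := by
        rintro _ ⟨t, ht, rfl⟩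
        rw [← Stmt10.map_commIter π t x c, hxc t ht, map_one]
      have hcore := Stmt10.core A' S' (π x) c hSA' hcomm' hnilA' hS'comm
      set Hbar : Subgroup ((G : Type) ⧸ U) :=
        Subgroup.closure ((A' : Set ((G : Type) ⧸ U)) ∪ {π x}) with hHbar
      have hHle : H ≤ Hbar.comap π := by
        apply Subgroup.topologicalClosure_minimal
        · rw [Subgroup.closure_le]
          rintro g (hg | hg)
          · exact Subgroup.mem_comap.mpr (Subgroup.subset_closure (Or.inl (hmapF g hg)))
          · rw [show g = x from hg]
            exact Subgroup.mem_comap.mpr (Subgroup.subset_closure (Or.inr rfl))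
        · exact hcomap_closed _
      set ψ : ↥H →* (G : Type) ⧸ U := π.comp H.subtype with hψ
      have hrange : ∀ n : ℕ,
          Subgroup.map ψ (Subgroup.lowerCentralSeries (⊤ : Subgroup ↥H) n) ≤ Stmt10.chain Hbar n := by
        intro n
        induction n with
        | zero =>
            rintro _ ⟨⟨g, hg⟩, -, rfl⟩
            exact hHle hg
        | succ n ih =>
            show Subgroup.map ψ ⁅Subgroup.lowerCentralSeries (⊤ : Subgroup ↥H) n, (⊤ : Subgroup ↥H)⁆ ≤
              ⁅Stmt10.chain Hbar n, Hbar⁆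
            rw [Subgroup.map_commutator]
            refine Subgroup.commutator_mono ih ?_
            rintro _ ⟨⟨g, hg⟩, -, rfl⟩
            exact hHle hg
      have hψh : ψ h ∈ Stmt10.chain Hbar (c * c + 1) := hrange _ ⟨h, hh, rfl⟩
      rw [hcore, Subgroup.mem_bot] at hψh
      have hmemU : (h : (G : Type)) ∈ U := by
        rw [← QuotientGroup.eq_one_iff (h : (G : Type))]
        exact hψh
      exact hhN hmemU
    have hHnilpotent : Group.IsNilpotent ↥H :=
      nilpotent_iff_lowerCentralSeries.mpr ⟨c * c + 1, hHnil⟩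
    have hHF : H ≤ F := hFmax H (by rw [hHdef]; exact H0.isClosed_topologicalClosure) hHnormal hHnilpotent
    exact hHF hxH
end

section
/- Let p be a prime, X a profinite group, and A a profinite abelian group (written additively) on which X acts continuously by automorphisms, such that: (i) for all a ∈ A and x ∈ X, a·x = a implies a = 0 or x = 1; and (ii) the closed subgroup pA + A(X−1) is a proper subgroup of A. Then X is a pro-p group. -/
set_option linter.unusedSectionVars false
set_option linter.unusedVariables false
set_option maxHeartbeats 1000000



open FirstOrder

/-- Additive version of `IsProP`: every open (normal) subgroup has `p`-power index. -/
def IsProPAdd (p : ℕ) (A : Type*) [AddGroup A] [TopologicalSpace A] : Prop :=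
  ∀ N : AddSubgroup A, N.Normal → IsOpen (N : Set A) → ∃ k : ℕ, N.index = p ^ k

/-- `pA`: the closure of the subgroup `{p·a : a ∈ A}`. -/
def pPart (p : ℕ) (A : Type*) [AddCommGroup A] [TopologicalSpace A]
    [IsTopologicalAddGroup A] : AddSubgroup A :=
  (AddSubgroup.closure {a : A | ∃ b : A, a = p • b}).topologicalClosure

/-- `A(X−1)`: the closed subgroup of `A` generated by all the images `A(x−1)`
of the maps `a ↦ x • a − a`, `x ∈ X`. -/
def augmentationSub (X A : Type*) [Group X] [AddCommGroup A] [TopologicalSpace A]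
    [IsTopologicalAddGroup A] [DistribMulAction X A] : AddSubgroup A :=
  (AddSubgroup.closure (⋃ x : X, Set.range fun a : A => x • a - a)).topologicalClosure

section Aux

variable {A : Type*} [AddCommGroup A] [TopologicalSpace A] [IsTopologicalAddGroup A]
  [CompactSpace A] [T2Space A] [TotallyDisconnectedSpace A]

/-- basis of open subgroups at 0 in a profinite additive group -/
lemma exists_openAddSubgroup_subset {s : Set A} (hs : IsOpen s) (h0 : (0:A) ∈ s) :
    ∃ U : AddSubgroup A, IsOpen (U : Set A) ∧ (U : Set A) ⊆ s := by
  obtain ⟨V, hVclopen, h0V, hVs⟩ := compact_exists_isClopen_in_isOpen hs h0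
  obtain ⟨H, hH⟩ := IsTopologicalAddGroup.exist_openAddSubgroup_sub_clopen_nhds_of_zero hVclopen h0V
  exact ⟨H.toAddSubgroup, H.isOpen, hH.trans hVs⟩

variable {G : Type*} [Group G] [TopologicalSpace G] [IsTopologicalGroup G] [CompactSpace G]
  [DistribMulAction G A] [ContinuousSMul G A]

/-- invariant shrink -/
lemma exists_invariant_openAddSubgroup (U : AddSubgroup A) (hU : IsOpen (U : Set A)) :
    ∃ V : AddSubgroup A, IsOpen (V : Set A) ∧ (∀ (x : G) (a : A), a ∈ V → x • a ∈ V) ∧ V ≤ U := by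
  let V : AddSubgroup A :=
  { carrier := {a : A | ∀ x : G, x • a ∈ U}
    zero_mem' := fun x => by simpa using U.zero_mem
    add_mem' := fun {a b} ha hb x => by rw [smul_add]; exact U.add_mem (ha x) (hb x)
    neg_mem' := fun {a} ha x => by rw [smul_neg]; exact U.neg_mem (ha x) }
  have hsub : ∀ (x : G) (a : A), a ∈ V → x • a ∈ V := by
    intro x a ha y
    rw [smul_smul]; exact ha (y * x)
  have hle : V ≤ U := fun a ha => by simpa using ha 1
  -- openness via tube lemma
  have hopen : IsOpen (V : Set A) := by
    have hn : IsOpen {p : G × A | p.1 • p.2 ∈ U} :=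
      hU.preimage (continuous_fst.smul continuous_snd)
    obtain ⟨u, v, _, hvopen, hsu, htv, huv⟩ :=
      generalized_tube_lemma (s := (Set.univ : Set G)) (t := ({(0:A)} : Set A))
        CompactSpace.isCompact_univ isCompact_singleton hn
        (by rintro ⟨x, a⟩ ⟨-, ha⟩; simp only [Set.mem_singleton_iff] at ha; subst ha
            simpa using U.zero_mem)
    refine AddSubgroup.isOpen_of_mem_nhds V (Filter.mem_of_superset
      (hvopen.mem_nhds (htv rfl)) ?_)
    intro a ha x
    exact huv (Set.mk_mem_prod (hsu (Set.mem_univ x)) ha)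
  exact ⟨V, hopen, hsub, hle⟩

/-- the kernel of the action on A/U -/
def actKernel (U : AddSubgroup A) : Subgroup G where
  carrier := {x : G | ∀ a : A, x • a - a ∈ U}
  one_mem' := fun a => by simpa using U.zero_mem
  mul_mem' := fun {x y} hx hy a => by
    have : (x * y) • a - a = (x • (y • a) - (y • a)) + (y • a - a) := by
      rw [mul_smul]; abel
    rw [this]; exact U.add_mem (hx _) (hy a)
  inv_mem' := fun {x} hx a => by
    have : x⁻¹ • a - a = -(x • (x⁻¹ • a) - x⁻¹ • a) := by
      rw [smul_inv_smul]; abel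
    rw [this]; exact U.neg_mem (hx _)

lemma actKernel_mono {U U' : AddSubgroup A} (h : U ≤ U') :
    (actKernel U : Subgroup G) ≤ actKernel U' := fun x hx a => h (hx a)

lemma actKernel_normal (U : AddSubgroup A) (hinv : ∀ (x : G) (a : A), a ∈ U → x • a ∈ U) :
    (actKernel U : Subgroup G).Normal := by
  constructor
  intro x hx g a
  have : (g * x * g⁻¹) • a - a = g • (x • (g⁻¹ • a) - g⁻¹ • a) := by
    rw [smul_sub, mul_smul, mul_smul, smul_inv_smul]
  rw [this]
  exact hinv g _ (hx _)

lemma actKernel_isOpen (U : AddSubgroup A) (hU : IsOpen (U : Set A)) :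
    IsOpen ((actKernel U : Subgroup G) : Set G) := by
  have hn : IsOpen {p : G × A | p.1 • p.2 - p.2 ∈ U} :=
    hU.preimage ((continuous_fst.smul continuous_snd).sub continuous_snd)
  obtain ⟨u, v, huopen, _, hsu, htv, huv⟩ :=
    generalized_tube_lemma (s := ({(1:G)} : Set G)) (t := (Set.univ : Set A))
      isCompact_singleton CompactSpace.isCompact_univ hn
      (by rintro ⟨x, a⟩ ⟨hx, -⟩; simp only [Set.mem_singleton_iff] at hx; subst hx
          simpa using U.zero_mem)
  refine Subgroup.isOpen_of_mem_nhds _ (Filter.mem_of_superset (huopen.mem_nhds (hsu rfl)) ?_)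
  intro x hx a
  exact huv (Set.mk_mem_prod hx (htv (Set.mem_univ a)))

end Aux

/-- order trick -/
lemma pow_pow_index_mem {G : Type*} [Group G] (K : Subgroup G) [K.Normal]
    (hK : K.index ≠ 0) {q : ℕ} (hq : q.Prime) {z : G} {b : ℕ} (hz : z ^ q ^ b ∈ K) :
    z ^ q ^ K.index ∈ K := by
  set w : G ⧸ K := QuotientGroup.mk z with hw
  have hw1 : w ^ q ^ b = 1 := by
    rw [hw, ← QuotientGroup.mk_pow, QuotientGroup.eq_one_iff]; exact hz
  have hdvd : orderOf w ∣ q ^ b := orderOf_dvd_of_pow_eq_one hw1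
  obtain ⟨j, hj, hord⟩ := (Nat.dvd_prime_pow hq).mp hdvd
  have hcard : orderOf w ∣ K.index := by
    rw [Subgroup.index]; exact orderOf_dvd_natCard w
  have hqj : q ^ j ≤ K.index := Nat.le_of_dvd (Nat.pos_of_ne_zero hK) (hord ▸ hcard)
  have hjle : j ≤ K.index := le_trans (le_of_lt (Nat.lt_pow_self (n := j) hq.one_lt)) hqj
  have : w ^ q ^ K.index = 1 := by
    apply orderOf_dvd_iff_pow_eq_one.mp
    rw [hord]; exact pow_dvd_pow q hjle
  rw [← QuotientGroup.eq_one_iff, QuotientGroup.mk_pow]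
  exact this


lemma smul_sum_sub_sum {G A : Type*} [Group G] [AddCommGroup A] [DistribMulAction G A]
    (z : G) (c : A) (Q : ℕ) :
    z • (∑ i ∈ Finset.range Q, (z ^ i) • c) - ∑ i ∈ Finset.range Q, (z ^ i) • c
      = (z ^ Q) • c - c := by
  rw [Finset.smul_sum]
  have h : ∀ i : ℕ, z • ((z ^ i) • c) = (z ^ (i+1)) • c := fun i => by
    rw [smul_smul, ← pow_succ']
  simp_rw [h]
  rw [← Finset.sum_sub_distrib, Finset.sum_range_sub (fun i => (z ^ i) • c) Q, pow_zero, one_smul]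

section Main

set_option maxHeartbeats 1000000

variable {G : Type*} [Group G] [TopologicalSpace G] [IsTopologicalGroup G] [CompactSpace G]
  {A : Type*} [AddCommGroup A] [TopologicalSpace A] [IsTopologicalAddGroup A]
  [CompactSpace A] [T2Space A] [TotallyDisconnectedSpace A]
  [DistribMulAction G A] [ContinuousSMul G A]

theorem prime_eq_of_dvd_index (p : ℕ) (hp : p.Prime)
    (h1 : ∀ (a : A) (x : G), x • a = a → a = 0 ∨ x = 1)
    (h2 : ((pPart p A ⊔ augmentationSub G A).topologicalClosure : AddSubgroup A) ≠ ⊤)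
    (N : Subgroup G) (hNnormal : N.Normal) (hNopen : IsOpen (N : Set G))
    (q : ℕ) (hq : q.Prime) (hqdvd : q ∣ N.index) : q = p := by
  by_contra hqp
  haveI := hNnormal
  -- the proper closed subgroup W
  set W : AddSubgroup A := (pPart p A ⊔ augmentationSub G A).topologicalClosure with hWdef
  have hWclosed : IsClosed (W : Set A) :=
    AddSubgroup.isClosed_topologicalClosure _
  obtain ⟨a₀, ha₀⟩ : ∃ a₀ : A, a₀ ∉ W := by
    by_contra h; push_neg at h; exact h2 ((AddSubgroup.eq_top_iff' W).mpr h)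
  -- choose U₀
  have hsopen : IsOpen {u : A | a₀ - u ∉ W} := by
    have : {u : A | a₀ - u ∉ W} = (fun u : A => a₀ - u) ⁻¹' ((W : Set A)ᶜ) := rfl
    rw [this]
    exact (hWclosed.isOpen_compl).preimage (continuous_const.sub continuous_id)
  have h0mem : (0:A) ∈ {u : A | a₀ - u ∉ W} := by simpa using ha₀
  obtain ⟨U₁, hU₁open, hU₁sub⟩ := exists_openAddSubgroup_subset hsopen h0mem
  obtain ⟨U₀, hU₀open, hU₀inv, hU₀le⟩ := exists_invariant_openAddSubgroup (G := G) U₁ hU₁open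
  have ha₀sup : a₀ ∉ W ⊔ U₀ := by
    intro h
    obtain ⟨w, hw, u, hu, huw⟩ := AddSubgroup.mem_sup.mp h
    have h' : a₀ - u ∉ W := hU₁sub (hU₀le hu)
    exact h' ((eq_sub_of_add_eq huw) ▸ hw)
  -- index type of invariant open subgroups below U₀
  let I := {U : AddSubgroup A // IsOpen (U : Set A) ∧ (∀ (x : G) (a : A), a ∈ U → x • a ∈ U) ∧ U ≤ U₀}
  have hU₀I : IsOpen ((U₀ : AddSubgroup A) : Set A) ∧
      (∀ (x : G) (a : A), a ∈ U₀ → x • a ∈ U₀) ∧ U₀ ≤ U₀ := ⟨hU₀open, hU₀inv, le_refl _⟩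
  haveI hInonempty : Nonempty I := ⟨⟨U₀, hU₀I⟩⟩
  have hmkinf : ∀ U V : I, ∃ T : I, T.1 ≤ U.1 ∧ T.1 ≤ V.1 := by
    intro U V
    refine ⟨⟨U.1 ⊓ V.1, ?_, ?_, le_trans inf_le_left U.2.2.2⟩, inf_le_left, inf_le_right⟩
    · rw [AddSubgroup.coe_inf]; exact U.2.1.inter V.2.1
    · intro x a ha
      rw [AddSubgroup.mem_inf] at ha ⊢
      exact ⟨U.2.2.1 x a ha.1, V.2.2.1 x a ha.2⟩
  -- kernels
  have hKopen : ∀ U : I, IsOpen ((actKernel (G := G) U.1 : Subgroup G) : Set G) :=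
    fun U => actKernel_isOpen U.1 U.2.1
  have hKnormal : ∀ U : I, (actKernel (G := G) U.1).Normal :=
    fun U => actKernel_normal U.1 U.2.2.1
  have hKindex : ∀ U : I, (actKernel (G := G) U.1).index ≠ 0 := by
    intro U
    haveI : Finite (G ⧸ (actKernel (G := G) U.1)) :=
      Subgroup.quotient_finite_of_isOpen _ (hKopen U)
    exact Subgroup.index_ne_zero_of_finite
  -- Cauchy element
  haveI : Finite (G ⧸ N) := Subgroup.quotient_finite_of_isOpen N hNopen
  haveI : Fintype (G ⧸ N) := Fintype.ofFinite _
  haveI : Fact q.Prime := ⟨hq⟩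
  have hqcard : q ∣ Fintype.card (G ⧸ N) := by
    rwa [← Nat.card_eq_fintype_card, ← Subgroup.index_eq_card]
  obtain ⟨ybar, hybar⟩ := exists_prime_orderOf_dvd_card q hqcard
  obtain ⟨y, hy⟩ := QuotientGroup.mk_surjective ybar
  rw [← hy] at hybar
  -- the family C
  let C : I → Set G := fun U =>
    (fun z : G => z ^ q ^ (actKernel (G := G) U.1).index) ⁻¹' ((actKernel (G := G) U.1 : Subgroup G) : Set G)
      ∩ ((N : Set G)ᶜ)
  have hCclosed : ∀ U : I, IsClosed (C U) := by
    intro U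
    exact (((Subgroup.isClosed_of_isOpen _ (hKopen U)).preimage (continuous_pow _)).inter
      (isClosed_compl_iff.mpr hNopen))
  have hCne : ∀ U : I, (C U).Nonempty := by
    intro U
    haveI := hKnormal U
    set K := actKernel (G := G) U.1 with hKdef
    set H := K ⊓ N with hHdef
    have hHopen : IsOpen (H : Set G) := by
      rw [hHdef, Subgroup.coe_inf]; exact (hKopen U).inter hNopen
    haveI : Finite (G ⧸ H) := Subgroup.quotient_finite_of_isOpen _ hHopen
    set w : G ⧸ H := QuotientGroup.mk y with hwdef
    have hm0 : orderOf w ≠ 0 := (orderOf_pos w).ne'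
    set m := orderOf w with hmdef
    have hqm : q ∣ m := by
      have hle : H ≤ Subgroup.comap (MonoidHom.id G) N := fun g hg => hg.2
      let φ : G ⧸ H →* G ⧸ N := QuotientGroup.map H N (MonoidHom.id G) hle
      have hφw : φ w = QuotientGroup.mk y := by
        rw [hwdef]; exact QuotientGroup.map_mk H N (MonoidHom.id G) hle y
      have := orderOf_map_dvd φ w
      rw [hφw, hybar] at this
      exact this
    set a := m.factorization q with hadef
    set s := m / q ^ a with hsdef
    have hms : q ^ a * s = m := Nat.ordProj_mul_ordCompl_eq_self m q
    have hsnd : ¬ q ∣ s := Nat.not_dvd_ordCompl hq hm0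
    refine ⟨y ^ s, ?_, ?_⟩
    · -- (y^s)^(q^K.index) ∈ K
      have hpowH : (y ^ s) ^ q ^ a ∈ H := by
        have heq : ((y ^ s) ^ q ^ a : G) = y ^ m := by
          rw [← pow_mul, mul_comm s (q ^ a), hms]
        rw [heq, ← QuotientGroup.eq_one_iff (G := G) (N := H)]
        rw [QuotientGroup.mk_pow]
        exact pow_orderOf_eq_one w
      have hpowK : (y ^ s) ^ q ^ a ∈ K := (inf_le_left : K ⊓ N ≤ K) hpowH
      exact pow_pow_index_mem K (hKindex U) hq hpowK
    · -- y ^ s ∉ N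
      intro hmem
      have hone : (QuotientGroup.mk (y ^ s) : G ⧸ N) = 1 :=
        (QuotientGroup.eq_one_iff _).mpr hmem
      have hgcd : Nat.gcd q s = 1 :=
        Nat.Coprime.gcd_eq_one ((Nat.Prime.coprime_iff_not_dvd hq).mpr hsnd)
      have : orderOf ((QuotientGroup.mk (y ^ s) : G ⧸ N)) = q := by
        rw [QuotientGroup.mk_pow, orderOf_pow, hybar, hgcd, Nat.div_one]
      rw [hone, orderOf_one] at this
      exact hq.one_lt.ne' this.symm
  have hCdir : Directed (· ⊇ ·) C := by
    intro U V
    obtain ⟨T, hTU, hTV⟩ := hmkinf U V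
    refine ⟨T, ?_, ?_⟩ <;>
    · intro z hz
      refine ⟨?_, hz.2⟩
      haveI := hKnormal U
      haveI := hKnormal V
      haveI := hKnormal T
      first
        | exact pow_pow_index_mem _ (hKindex U) hq (actKernel_mono hTU hz.1)
        | exact pow_pow_index_mem _ (hKindex V) hq (actKernel_mono hTV hz.1)
  obtain ⟨z, hzmem⟩ := IsCompact.nonempty_iInter_of_directed_nonempty_isCompact_isClosed C hCdir
    hCne (fun U => (hCclosed U).isCompact) hCclosed
  simp only [Set.mem_iInter] at hzmem
  have hzN : z ∉ N := (hzmem ⟨U₀, hU₀I⟩).2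
  have hzpow : ∀ U : I, z ^ q ^ (actKernel (G := G) U.1).index ∈ actKernel (G := G) U.1 :=
    fun U => (hzmem U).1
  -- membership facts in W
  have hpPartW : pPart p A ≤ W := le_trans le_sup_left (AddSubgroup.le_topologicalClosure _)
  have haugW : augmentationSub G A ≤ W := le_trans le_sup_right (AddSubgroup.le_topologicalClosure _)
  have hpmem : ∀ b : A, (p • b : A) ∈ W := fun b =>
    hpPartW (AddSubgroup.le_topologicalClosure _ (AddSubgroup.subset_closure ⟨b, rfl⟩))
  have hpmemZ : ∀ b : A, ((p : ℤ) • b : A) ∈ W := fun b => by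
    rw [natCast_zsmul]; exact hpmem b
  have haugmem : ∀ (x : G) (c : A), x • c - c ∈ W := fun x c =>
    haugW (AddSubgroup.le_topologicalClosure _
      (AddSubgroup.subset_closure (Set.mem_iUnion.mpr ⟨x, Set.mem_range_self c⟩)))
  -- the sup is open
  have hsupopen : IsOpen ((W ⊔ U₀ : AddSubgroup A) : Set A) := by
    refine AddSubgroup.isOpen_of_mem_nhds _ (Filter.mem_of_superset
      (hU₀open.mem_nhds U₀.zero_mem) ?_)
    intro u hu
    exact AddSubgroup.mem_sup_right hu
  -- the family F
  let F : I → Set A := fun U =>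
    (fun a : A => z • a - a) ⁻¹' ((U.1 : AddSubgroup A) : Set A)
      ∩ (((W ⊔ U₀ : AddSubgroup A) : Set A)ᶜ)
  have hFclosed : ∀ U : I, IsClosed (F U) := by
    intro U
    exact ((AddSubgroup.isClosed_of_isOpen _ U.2.1).preimage
      ((continuous_id.const_smul z).sub continuous_id)).inter (isClosed_compl_iff.mpr hsupopen)
  have hFne : ∀ U : I, (F U).Nonempty := by
    intro U
    set K := actKernel (G := G) U.1 with hKdef
    set Q := q ^ K.index with hQdef
    have hzK : z ^ Q ∈ K := hzpow U
    have hcop : IsCoprime (p : ℤ) ((q : ℤ) ^ K.index) := by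
      rw [← Nat.cast_pow, Nat.isCoprime_iff_coprime]
      exact Nat.Coprime.pow_right _ ((Nat.coprime_primes hp hq).mpr (fun h => hqp h.symm))
    obtain ⟨α, β, hαβ⟩ := hcop
    set c : A := β • a₀ with hcdef
    set S : A := ∑ i ∈ Finset.range Q, (z ^ i) • c with hSdef
    set D : A := ∑ i ∈ Finset.range Q, ((z ^ i) • c - c) with hDdef
    have hDW : D ∈ W := AddSubgroup.sum_mem _ (fun i _ => haugmem _ c)
    have hcast : ((q : ℤ) ^ K.index) • c = Q • c := by
      rw [hQdef, ← Nat.cast_pow, natCast_zsmul]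
    have ha₀eq : a₀ = (p : ℤ) • (α • a₀) + Q • c := by
      have h1 : (α * (p : ℤ) + β * ((q : ℤ) ^ K.index)) • a₀ = a₀ := by
        rw [hαβ, one_zsmul]
      rw [add_zsmul, mul_comm α, mul_comm β, mul_smul, mul_smul, ← hcdef, hcast] at h1
      exact h1.symm
    have key2 : D = S - Q • c := by
      rw [hDdef, Finset.sum_sub_distrib, Finset.sum_const, Finset.card_range, ← hSdef]
    have hSnot : S ∉ (W ⊔ U₀ : AddSubgroup A) := by
      intro hS
      apply ha₀sup
      have hsd : Q • c = S - D := by rw [key2, sub_sub_cancel]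
      rw [ha₀eq, hsd]
      exact AddSubgroup.add_mem _ (AddSubgroup.mem_sup_left (hpmemZ _))
        (AddSubgroup.sub_mem _ hS (AddSubgroup.mem_sup_left hDW))
    refine ⟨S, ?_, hSnot⟩
    show z • S - S ∈ (U.1 : AddSubgroup A)
    rw [hSdef, smul_sum_sub_sum z c Q]
    exact hzK c
  have hFdir : Directed (· ⊇ ·) F := by
    intro U V
    obtain ⟨T, hTU, hTV⟩ := hmkinf U V
    exact ⟨T, fun a ha => ⟨hTU ha.1, ha.2⟩, fun a ha => ⟨hTV ha.1, ha.2⟩⟩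
  obtain ⟨a, hamem⟩ := IsCompact.nonempty_iInter_of_directed_nonempty_isCompact_isClosed F hFdir
    hFne (fun U => (hFclosed U).isCompact) hFclosed
  simp only [Set.mem_iInter] at hamem
  have haW : a ∉ (W ⊔ U₀ : AddSubgroup A) := (hamem ⟨U₀, hU₀I⟩).2
  -- z fixes a
  have hfix : z • a = a := by
    by_contra hne
    have hd : z • a - a ≠ 0 := sub_ne_zero.mpr hne
    have hop : IsOpen ({z • a - a}ᶜ : Set A) := isClosed_singleton.isOpen_compl
    have h0 : (0:A) ∈ ({z • a - a}ᶜ : Set A) := by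
      simp only [Set.mem_compl_iff, Set.mem_singleton_iff]
      exact fun h => hd h.symm
    obtain ⟨U', hU'open, hU'sub⟩ := exists_openAddSubgroup_subset hop h0
    obtain ⟨U'', hU''open, hU''inv, hU''le⟩ := exists_invariant_openAddSubgroup (G := G) U' hU'open
    have hTmem : IsOpen ((U'' ⊓ U₀ : AddSubgroup A) : Set A) ∧
        (∀ (x : G) (a : A), a ∈ U'' ⊓ U₀ → x • a ∈ U'' ⊓ U₀) ∧ U'' ⊓ U₀ ≤ U₀ := by
      refine ⟨?_, ?_, inf_le_right⟩
      · rw [AddSubgroup.coe_inf]; exact hU''open.inter hU₀open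
      · intro x b hb
        rw [AddSubgroup.mem_inf] at hb ⊢
        exact ⟨hU''inv x b hb.1, hU₀inv x b hb.2⟩
    have := (hamem ⟨U'' ⊓ U₀, hTmem⟩).1
    have hmem' : z • a - a ∈ U'' := ((AddSubgroup.mem_inf).mp this).1
    exact (hU'sub (hU''le hmem')) rfl
  rcases h1 a z hfix with h | h
  · exact haW (h ▸ (W ⊔ U₀ : AddSubgroup A).zero_mem)
  · exact hzN (h ▸ N.one_mem)

end Main


/-- Lemma `pro-pX`: let `X` be a profinite group acting
continuously on a profinite abelian group `A` such that (i) only `0` is fixed by a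
nontrivial element and only `1` fixes a nonzero element, and (ii) the closed subgroup
`pA + A(X−1)` is proper in `A`.  Then `X` is a pro-`p` group. -/
theorem proP_of_action (p : ℕ) (hp : p.Prime) (X : ProfiniteGrp.{0})
    (A : Type) [AddCommGroup A] [TopologicalSpace A] [IsTopologicalAddGroup A]
    [CompactSpace A] [T2Space A] [TotallyDisconnectedSpace A]
    [DistribMulAction (X : Type) A] [ContinuousSMul (X : Type) A]
    (h1 : ∀ (a : A) (x : (X : Type)), x • a = a → a = 0 ∨ x = 1)
    (h2 : (pPart p A ⊔ augmentationSub (X : Type) A).topologicalClosure ≠ ⊤) :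
    IsProP p X := by
  intro N hNnormal hNopen
  haveI : Finite ((X : Type) ⧸ N) := Subgroup.quotient_finite_of_isOpen N hNopen
  have hNindex : N.index ≠ 0 := Subgroup.index_ne_zero_of_finite
  refine ⟨N.index.primeFactorsList.length, ?_⟩
  exact Nat.eq_prime_pow_of_unique_prime_dvd hNindex
    (fun {d} hd hdvd => prime_eq_of_dvd_index p hp h1 h2 N hNnormal hNopen d hd hdvd)
end

section
/- Let X be an infinite profinite group acting continuously and faithfully by automorphisms on a profinite abelian group A (written additively). Then the intersection of A(x−1) over all x ∈ X with x ≠ 1 is 0. -/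
open FirstOrder

/-- if an infinite profinite group `X` acts continuously and
faithfully on a profinite abelian group `A`, then the intersection of the images
`A(x−1)` over all `x ≠ 1` is `0`. -/
theorem iInter_image_sub_eq_zero_of_faithful (X : ProfiniteGrp.{0})
    (hX : Infinite (X : Type))
    (A : Type) [AddCommGroup A] [TopologicalSpace A] [IsTopologicalAddGroup A]
    [CompactSpace A] [T2Space A] [TotallyDisconnectedSpace A]
    [DistribMulAction (X : Type) A] [ContinuousSMul (X : Type) A]
    (hfaith : ∀ x : (X : Type), (∀ a : A, x • a = a) → x = 1) :
    (⋂ x : {x : (X : Type) // x ≠ 1}, Set.range fun a : A => x.1 • a - a)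
      = ({0} : Set A) := by
  apply Set.eq_singleton_iff_unique_mem.mpr
  refine ⟨Set.mem_iInter.mpr fun x => ⟨0, by simp⟩, ?_⟩
  intro a ha
  by_contra hane
  -- find an open additive subgroup H of A with a ∉ H
  obtain ⟨W, hWclopen, hW0, hWsub⟩ :=
    compact_exists_isClopen_in_isOpen (isClosed_singleton (x := a)).isOpen_compl
      (by simpa using Ne.symm hane)
  obtain ⟨H, hHW⟩ :=
    IsTopologicalAddGroup.exist_openAddSubgroup_sub_clopen_nhds_of_zero hWclopen hW0
  have haH : a ∉ (H : Set A) := fun h => hWsub (hHW h) rfl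
  -- the set K of x moving everything into H
  set f : Prod (X : Type) A → A := fun p => p.1 • p.2 - p.2 with hf
  have hfc : Continuous f := (continuous_fst.smul continuous_snd).sub continuous_snd
  set K : Set (X : Type) := (Prod.fst '' (f ⁻¹' ((H : Set A)ᶜ)))ᶜ with hK
  have hKmem : ∀ x : (X : Type), x ∈ K ↔ ∀ b : A, x • b - b ∈ (H : Set A) := by
    intro x
    simp only [hK, Set.mem_compl_iff, Set.mem_image, not_exists, not_and]
    constructor
    · intro h b
      by_contra hb
      exact h ⟨x, b⟩ hb rfl
    · rintro h ⟨y, b⟩ hb rfl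
      exact hb (h b)
  have hKopen : IsOpen K :=
    (isClosedMap_fst_of_compactSpace _ (H.isOpen.isClosed_compl.preimage hfc)).isOpen_compl
  have h1K : (1 : (X : Type)) ∈ K := (hKmem 1).mpr (fun b => by simpa using H.zero_mem)
  -- K cannot be {1} since X is infinite
  have : ∃ x ∈ K, x ≠ (1 : (X : Type)) := by
    by_contra hcon
    push_neg at hcon
    have hKeq : K = ({1} : Set (X : Type)) :=
      Set.eq_singleton_iff_unique_mem.mpr ⟨h1K, hcon⟩
    haveI : DiscreteTopology (X : Type) :=
      discreteTopology_iff_isOpen_singleton_one.mpr (hKeq ▸ hKopen)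
    exact not_finite_iff_infinite.mpr hX finite_of_compact_of_discrete
  obtain ⟨x, hxK, hx1⟩ := this
  obtain ⟨b, hb⟩ := Set.mem_iInter.mp ha ⟨x, hx1⟩
  exact haH (hb ▸ (hKmem x).mp hxK b)
end

section
/- Let G be a profinite group acting continuously by automorphisms on a nonzero profinite abelian group A (written additively), with G/C_G(A) abelian, and suppose A is a nice G-module. Let a ∈ A be nonzero such that C_G(a) is maximal among the stabilizers C_G(b) of nonzero elements b ∈ A, and put B = C_A(C_G(a)), the set of elements of A fixed by every element of C_G(a). Then B is a closed G-invariant subgroup of A which is a very nice G-module, and if B ≠ A then the quotient G-module A/B is nice. -/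
open FirstOrder
open scoped commutatorElement

/-- The subgroup `C_A(S)` of points of `A` fixed by every element of `S ⊆ G`. -/
def fixedPointsSub (G A : Type*) [Group G] [AddCommGroup A] [DistribMulAction G A]
    (S : Set G) : AddSubgroup A where
  carrier := {b : A | ∀ g ∈ S, g • b = b}
  add_mem' := by
    intro x y hx hy g hg
    rw [smul_add, hx g hg, hy g hg]
  zero_mem' := by
    intro g _
    exact smul_zero g
  neg_mem' := by
    intro x hx g hg
    rw [smul_neg, hx g hg]

/-- The `G`-module `D/C` (for `C ≤ D` submodules of `A`) is *very nice*: writing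
`X` for the quotient of `G` by the kernel of its action on `D/C`, (i) every nonzero
element of `D/C` has trivial stabilizer in `X`, and (ii) the intersection of the
images `(D/C)(x−1)` over `1 ≠ x ∈ X` is `0`.  (Everything is expressed inside `A`.) -/
def VeryNiceFactor (G A : Type*) [Group G] [AddCommGroup A] [DistribMulAction G A]
    (C D : AddSubgroup A) : Prop :=
  (∀ d ∈ D, ∀ g : G, g • d - d ∈ C → (d ∈ C ∨ ∀ d' ∈ D, g • d' - d' ∈ C)) ∧
  (∀ d ∈ D, (∀ g : G, ¬ (∀ d' ∈ D, g • d' - d' ∈ C) →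
      ∃ e ∈ D, d - (g • e - e) ∈ C) → d ∈ C)

/-- Lemma `nice`: let `G` act continuously on the nonzero profinite
abelian group `A` with `G/C_G(A)` abelian and `A` nice.  If `a ≠ 0` has `C_G(a)`
maximal among stabilizers of nonzero elements and `B = C_A(C_G(a))`, then `B` is a
closed `G`-invariant subgroup which is a very nice `G`-module, and if `B ≠ A` then
`A/B` is nice (every stabilizer modulo `B` of an element outside `B` has infinite
index, witnessed by an infinite set of pairwise inequivalent coset representatives). -/
theorem fixedPoints_veryNice_and_quotient_nice (G : ProfiniteGrp.{0})
    (A : Type) [AddCommGroup A] [TopologicalSpace A] [IsTopologicalAddGroup A]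
    [CompactSpace A] [T2Space A] [TotallyDisconnectedSpace A]
    [DistribMulAction (G : Type) A] [ContinuousSMul (G : Type) A]
    (hA0 : ∃ a : A, a ≠ 0)
    (habel : ∀ g h : (G : Type), ∀ a : A, ⁅g, h⁆ • a = a)
    (hnice : ∀ a : A, a ≠ 0 → Infinite ((G : Type) ⧸ MulAction.stabilizer (G : Type) a))
    (a : A) (ha : a ≠ 0)
    (hmax : ∀ b : A, b ≠ 0 →
      MulAction.stabilizer (G : Type) a ≤ MulAction.stabilizer (G : Type) b →
      MulAction.stabilizer (G : Type) b = MulAction.stabilizer (G : Type) a) :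
    IsClosed ((fixedPointsSub (G : Type) A (MulAction.stabilizer (G : Type) a) : Set A)) ∧
    (∀ g : (G : Type), ∀ b ∈ fixedPointsSub (G : Type) A (MulAction.stabilizer (G : Type) a),
      g • b ∈ fixedPointsSub (G : Type) A (MulAction.stabilizer (G : Type) a)) ∧
    VeryNiceFactor (G : Type) A ⊥ (fixedPointsSub (G : Type) A (MulAction.stabilizer (G : Type) a)) ∧
    ((fixedPointsSub (G : Type) A (MulAction.stabilizer (G : Type) a) ≠ ⊤) →
      ∀ c : A, c ∉ fixedPointsSub (G : Type) A (MulAction.stabilizer (G : Type) a) →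
        ∃ T : Set (G : Type), T.Infinite ∧ ∀ t ∈ T, ∀ t' ∈ T, t ≠ t' →
          (t⁻¹ * t') • c - c ∉ fixedPointsSub (G : Type) A (MulAction.stabilizer (G : Type) a)) := by
  set S : Subgroup (G : Type) := MulAction.stabilizer (G : Type) a with hSdef
  set B : AddSubgroup A := fixedPointsSub (G : Type) A (S : Set (G : Type)) with hBdef
  have memB : ∀ b : A, b ∈ B ↔ ∀ g ∈ (S : Set (G : Type)), g • b = b := fun b => Iff.rfl
  -- the action is "abelian"
  have hcomm : ∀ (g h : (G : Type)) (x : A), g • h • x = h • g • x := by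
    intro g h x
    have h1 := habel g h ((h * g) • x)
    rw [commutatorElement_def] at h1
    rw [smul_smul] at h1
    have h2 : g * h * g⁻¹ * h⁻¹ * (h * g) = g * h := by group
    rw [h2] at h1
    rw [← smul_smul, ← smul_smul] at h1
    exact h1
  -- B is closed
  have hBclosed : IsClosed (B : Set A) := by
    have : (B : Set A) = ⋂ s ∈ (S : Set (G : Type)), {b : A | s • b = b} := by
      ext b
      simp only [Set.mem_iInter, Set.mem_setOf_eq]
      exact memB b
    rw [this]
    exact isClosed_biInter fun s _ =>
      isClosed_eq (continuous_const_smul s) continuous_id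
  -- B is G-invariant
  have hBinv : ∀ g : (G : Type), ∀ b ∈ B, g • b ∈ B := by
    intro g b hb
    rw [memB] at hb ⊢
    intro s hs
    rw [hcomm s g b, hb s hs]
  -- a ∈ B
  have haB : a ∈ B := by
    rw [memB]
    intro s hs
    exact hs
  -- stabilizers of nonzero elements of B equal S
  have hstabB : ∀ d : A, d ∈ B → d ≠ 0 → MulAction.stabilizer (G : Type) d = S := by
    intro d hdB hd0
    apply hmax d hd0
    intro s hs
    exact (memB d).mp hdB s hs
  -- S is closed
  have hSset : (S : Set (G : Type)) = {g : (G : Type) | g • a = a} := by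
    ext g; exact MulAction.mem_stabilizer_iff
  have hSclosed : IsClosed (S : Set (G : Type)) := by
    rw [hSset]
    exact isClosed_eq (continuous_id.smul continuous_const) continuous_const
  -- S has empty interior
  have hSint : interior (S : Set (G : Type)) = ∅ := by
    by_contra hne
    obtain ⟨x, hx⟩ := Set.nonempty_iff_ne_empty.mpr hne
    have hx1 : (1 : (G : Type)) ∈ interior (S : Set (G : Type)) := by
      have hmem : (S : Set (G : Type)) ∈ nhds x := mem_interior_iff_mem_nhds.mp hx
      have hxS : x ∈ S := interior_subset hx
      have hopen : IsOpen (S : Set (G : Type)) := Subgroup.isOpen_of_mem_nhds S hmem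
      rw [hopen.interior_eq]
      exact one_mem S
    have hopen : IsOpen (S : Set (G : Type)) := Subgroup.isOpen_of_one_mem_interior S hx1
    have hfin : Finite ((G : Type) ⧸ S) := Subgroup.quotient_finite_of_isOpen S hopen
    have hinf : Infinite ((G : Type) ⧸ S) := hnice a ha
    exact hinf.not_finite hfin
  refine ⟨hBclosed, fun g b hb => hBinv g b hb, ⟨?_, ?_⟩, ?_⟩
  · -- very nice, part (i)
    intro d hdB g hg
    by_cases hd0 : d = 0
    · left; rw [AddSubgroup.mem_bot]; exact hd0
    · right
      intro d' hd'B
      rw [AddSubgroup.mem_bot, sub_eq_zero]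
      have hgS : g ∈ S := by
        rw [← hstabB d hdB hd0]
        rw [AddSubgroup.mem_bot, sub_eq_zero] at hg
        exact hg
      exact (memB d').mp hd'B g hgS
  · -- very nice, part (ii)
    intro d hdB hd
    rw [AddSubgroup.mem_bot]
    -- the set of (g, e) with e ∈ B and g•e - e = d
    set K : Set (Prod (G : Type) A) := {p | p.2 ∈ B ∧ p.1 • p.2 - p.2 = d} with hKdef
    have hKclosed : IsClosed K := by
      apply IsClosed.inter
      · exact hBclosed.preimage continuous_snd
      · exact isClosed_eq ((continuous_fst.smul continuous_snd).sub continuous_snd)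
          continuous_const
    have hKcompact : IsCompact K := hKclosed.isCompact
    have hWclosed : IsClosed (Prod.fst '' K) := (hKcompact.image continuous_fst).isClosed
    have hsub : (S : Set (G : Type))ᶜ ⊆ Prod.fst '' K := by
      intro g hg
      have hgact : ¬ (∀ d' ∈ B, g • d' - d' ∈ (⊥ : AddSubgroup A)) := by
        intro hall
        apply hg
        rw [hSset]
        have := hall a haB
        rw [AddSubgroup.mem_bot, sub_eq_zero] at this
        exact this
      obtain ⟨e, heB, he⟩ := hd g hgact
      rw [AddSubgroup.mem_bot, sub_eq_zero] at he
      exact ⟨(g, e), ⟨heB, he.symm⟩, rfl⟩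
    have h1W : (1 : (G : Type)) ∈ Prod.fst '' K := by
      have hcl : closure ((S : Set (G : Type))ᶜ) ⊆ Prod.fst '' K :=
        closure_minimal hsub hWclosed
      apply hcl
      rw [closure_compl, hSint]
      simp
    obtain ⟨⟨g, e⟩, ⟨heB, heq⟩, hg1⟩ := h1W
    simp only at hg1
    rw [hg1] at heq
    rw [one_smul, sub_self] at heq
    exact heq.symm
  · -- quotient nice
    intro _ c hc
    -- get s ∈ S moving c
    have : ¬ ∀ g ∈ (S : Set (G : Type)), g • c = c := fun h => hc ((memB c).mpr h)
    push_neg at this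
    obtain ⟨s, hsS, hsc⟩ := this
    set d : A := s • c - c with hddef
    have hd0 : d ≠ 0 := sub_ne_zero.mpr hsc
    -- the "stabilizer of c mod B"
    set H : Subgroup (G : Type) :=
      { carrier := {g : (G : Type) | g • c - c ∈ B}
        one_mem' := by
          simp only [Set.mem_setOf_eq, one_smul, sub_self]
          exact B.zero_mem
        mul_mem' := by
          intro x y hx hy
          have : (x * y) • c - c = x • (y • c - c) + (x • c - c) := by
            rw [mul_smul, smul_sub]; abel
          simp only [Set.mem_setOf_eq] at hx hy ⊢
          rw [this]
          exact B.add_mem (hBinv x _ hy) hx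
        inv_mem' := by
          intro x hx
          simp only [Set.mem_setOf_eq] at hx ⊢
          have : x⁻¹ • c - c = -(x⁻¹ • (x • c - c)) := by
            rw [smul_sub, smul_smul, inv_mul_cancel, one_smul]; abel
          rw [this]
          exact B.neg_mem (hBinv x⁻¹ _ hx) } with hHdef
    have hHle : H ≤ MulAction.stabilizer (G : Type) d := by
      intro g hg
      have hb : g • c - c ∈ B := hg
      have hsb : s • (g • c - c) = g • c - c := (memB _).mp hb s hsS
      rw [MulAction.mem_stabilizer_iff]
      have : g • d = g • (s • c) - g • c := by rw [hddef, smul_sub]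
      rw [this, hcomm g s c]
      rw [smul_sub] at hsb
      rw [hddef]
      have := sub_eq_iff_eq_add.mp hsb
      rw [this]
      abel
    have hinfd : Infinite ((G : Type) ⧸ MulAction.stabilizer (G : Type) d) := hnice d hd0
    have hinfH : Infinite ((G : Type) ⧸ H) := by
      apply Infinite.of_surjective (Subgroup.quotientMapOfLE hHle)
      intro q
      obtain ⟨g, rfl⟩ := QuotientGroup.mk_surjective q
      exact ⟨QuotientGroup.mk g, rfl⟩
    let f : ℕ ↪ (G : Type) ⧸ H := Infinite.natEmbedding _
    refine ⟨Set.range (fun n => (f n).out), ?_, ?_⟩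
    · apply Set.infinite_range_of_injective
      intro n m hnm
      dsimp only at hnm
      apply f.injective
      rw [← QuotientGroup.out_eq' (f n), ← QuotientGroup.out_eq' (f m), hnm]
    · rintro t ⟨n, rfl⟩ t' ⟨m, rfl⟩ htt' hmem
      dsimp only at htt' hmem
      apply htt'
      have hH : (f n).out⁻¹ * (f m).out ∈ H := hmem
      have h2 : QuotientGroup.mk (s := H) (f n).out = QuotientGroup.mk (f m).out :=
        QuotientGroup.eq.mpr hH
      rw [QuotientGroup.out_eq', QuotientGroup.out_eq'] at h2
      rw [f.injective h2]
end

section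
/- Let p be a prime and let P be a nontrivial soluble pro-p group of finite rank with trivial FC-centre, Z_f(P) = 1. Then the quotient P/Fit(P) is infinite. -/
open FirstOrder

/-- A nontrivial nilpotent group has nontrivial centre. -/
lemma aux_center_ne_bot {G : Type*} [Group G] [Group.IsNilpotent G] [Nontrivial G] :
    Subgroup.center G ≠ ⊥ := by
  intro h
  obtain ⟨n, hn⟩ := Group.IsNilpotent.nilpotent (G := G)
  have key : ∀ m, Subgroup.upperCentralSeries G m = ⊥ := by
    intro m
    induction m with
    | zero => exact Subgroup.upperCentralSeries_zero G
    | succ m ih =>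
      refine le_antisymm (fun x hx => ?_) bot_le
      rw [Subgroup.mem_upperCentralSeries_succ_iff] at hx
      have hxc : x ∈ Subgroup.center G := by
        rw [Subgroup.mem_center_iff]
        intro y
        have h1 := hx y
        rw [ih, Subgroup.mem_bot] at h1
        have h2 : x * y * x⁻¹ = y := by
          have := mul_eq_one_iff_eq_inv.mp h1
          simpa using this
        calc y * x = (x * y * x⁻¹) * x := by rw [h2]
        _ = x * y := by group
      rw [h, Subgroup.mem_bot] at hxc
      simpa [hxc] using Subgroup.one_mem (⊥ : Subgroup G)
  rw [key n] at hn
  exact (bot_ne_top (α := Subgroup G)) hn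

/-- a nontrivial soluble pro-`p` group of finite rank with trivial
FC-centre has infinite quotient `P/Fit(P)`. -/
theorem infinite_quotient_fitting_of_trivial_FCCentre (p : ℕ) (hp : p.Prime)
    (P : ProfiniteGrp.{0}) (hnt : ∃ x : (P : Type), x ≠ 1)
    (hpp : IsProP p P) (hsol : IsSolvable (P : Type)) (hrk : FiniteRank P)
    (hfc : FCCentre (P : Type) = {1})
    (F : Subgroup (P : Type)) (hF : IsFittingSubgroup (P : Type) F) :
    Infinite ((P : Type) ⧸ F) := by
  by_contra hinf
  rw [not_infinite_iff_finite] at hinf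
  have hFI : F.FiniteIndex := Subgroup.finiteIndex_of_finite_quotient (H := F)
  obtain ⟨hFcl, hFn, hFnil, hFmax⟩ := hF
  -- Step 1: the centre of F is trivial, hence F = ⊥.
  have hzbot : Subgroup.center ↥F = ⊥ := by
    refine le_antisymm (fun z hzc => ?_) bot_le
    rw [Subgroup.mem_bot]
    set C : Subgroup (P : Type) := Subgroup.centralizer {((z : ↥F) : (P : Type))} with hC
    have hle : F ≤ C := by
      intro f hf
      rw [hC, Subgroup.mem_centralizer_iff]
      rintro y rfl
      have := (Subgroup.mem_center_iff.mp hzc) ⟨f, hf⟩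
      simpa using congrArg Subtype.val this.symm
    haveI : C.FiniteIndex := Subgroup.finiteIndex_of_le hle
    have hfin : {h : (P : Type) | IsConj ((z : ↥F) : (P : Type)) h}.Finite := by
      refine Set.Finite.subset (Set.finite_range
        (fun q : (P : Type) ⧸ C => q.out * ((z : ↥F) : (P : Type)) * q.out⁻¹)) ?_
      intro h hh
      rw [Set.mem_setOf_eq, isConj_iff] at hh
      obtain ⟨c, hc⟩ := hh
      refine ⟨QuotientGroup.mk c, ?_⟩
      dsimp only
      obtain ⟨d, hd⟩ := QuotientGroup.mk_out_eq_mul C c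
      have hdz : ((z : ↥F) : (P : Type)) * (d : (P : Type))
          = (d : (P : Type)) * ((z : ↥F) : (P : Type)) :=
        (Subgroup.mem_centralizer_iff.mp d.2) _ rfl
      have hch : c * ((z : ↥F) : (P : Type)) * c⁻¹ = h := hc
      rw [hd]
      rw [mul_inv_rev]
      calc c * (d : (P : Type)) * ((z : ↥F) : (P : Type)) * ((d : (P : Type))⁻¹ * c⁻¹)
          = c * ((d : (P : Type)) * ((z : ↥F) : (P : Type)) * (d : (P : Type))⁻¹) * c⁻¹ := by
            group
        _ = c * ((z : ↥F) : (P : Type)) * c⁻¹ := by rw [← hdz]; group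
        _ = h := by rw [← hch]
    have hmem : ((z : ↥F) : (P : Type)) ∈ FCCentre (P : Type) := hfin
    rw [hfc, Set.mem_singleton_iff] at hmem
    exact Subtype.ext hmem
  have hFbot : F = ⊥ := by
    by_contra hne
    haveI : Nontrivial ↥F := by
      rcases Subgroup.bot_or_nontrivial F with h | h
      · exact absurd h hne
      · exact h
    exact aux_center_ne_bot hzbot
  -- Step 2: a minimal nontrivial term of the derived series gives a nontrivial
  -- abelian closed normal subgroup, contradicting F = ⊥.
  obtain ⟨x, hx⟩ := hnt
  haveI : Nontrivial (P : Type) := ⟨⟨x, 1, hx⟩⟩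
  obtain ⟨n, hn⟩ := @Group.IsSolvable.solvable (P : Type) _ hsol
  have h0 : derivedSeries (P : Type) 0 ≠ ⊥ := by
    rw [derivedSeries_zero]
    exact top_ne_bot
  -- find minimal m with derivedSeries (m+1) = ⊥ but derivedSeries m ≠ ⊥
  have hstep : ∃ m, derivedSeries (P : Type) m ≠ ⊥ ∧
      derivedSeries (P : Type) (m + 1) = ⊥ := by
    by_contra hcon
    push_neg at hcon
    have hall : ∀ m, derivedSeries (P : Type) m ≠ ⊥ := by
      intro m
      induction m with
      | zero => exact h0
      | succ m ih => exact hcon m ih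
    exact hall n hn
  obtain ⟨m, hA, hAb⟩ := hstep
  set A : Subgroup (P : Type) := derivedSeries (P : Type) m with hAdef
  haveI hAnorm : A.Normal := derivedSeries_normal _ _
  have hAcomm : ∀ a b : ↥A, a * b = b * a := by
    intro a b
    have : ⁅A, A⁆ = ⊥ := by
      rw [hAdef, ← derivedSeries_succ]; exact hAb
    have hcent := Subgroup.commutator_eq_bot_iff_le_centralizer.mp this
    have := (Subgroup.mem_centralizer_iff.mp (hcent a.2)) (b : (P : Type)) b.2
    exact Subtype.ext this.symm
  -- closure of A
  set B := A.topologicalClosure with hBdef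
  haveI hBnorm : B.Normal := Subgroup.is_normal_topologicalClosure A
  letI hBcomm : CommGroup ↥B := Subgroup.commGroupTopologicalClosure A hAcomm
  haveI hBnil : Group.IsNilpotent ↥B := by
    refine ⟨⟨1, ?_⟩⟩
    rw [Subgroup.upperCentralSeries_one, Subgroup.eq_top_iff']
    intro x
    rw [Subgroup.mem_center_iff]
    intro y
    exact hBcomm.mul_comm y x
  have hBle : B ≤ F := hFmax B A.isClosed_topologicalClosure hBnorm hBnil
  have : A ≤ ⊥ := le_trans (le_trans A.le_topologicalClosure hBle) (le_of_eq hFbot)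
  exact hA (le_antisymm this bot_le)
end
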